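/- arXiv:2504.14347 — 6 statements merged into one kernel-verified Lean document; each statement's English description precedes it below -/
import Mathlib

section
/- There is no non-trivial finite group G such that CD(G) = L(G), where L(G) is the lattice of all subgroups of G. Equivalently, if G is a non-trivial finite group, then there exists a subgroup H ≤ G with m_G(H) < m*(G). -/
/-- The Chermak–Delgado measure of a subgroup `H` of `G`: `m_G(H) = |H| * |C_G(H)|`. -/
noncomputable def cdMeasure {G : Type*} [Group G] (H : Subgroup G) : ℕ :=
  Nat.card H * Nat.card (Subgroup.centralizer (H : Set G))

/-- `m*(G)`, the maximal Chermak–Delgado measure over all subgroups of `G`. -/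
noncomputable def cdMax (G : Type*) [Group G] : ℕ :=
  sSup (Set.range (cdMeasure (G := G)))

/-- The Chermak–Delgado lattice of `G`, as the set of subgroups attaining `m*(G)`. -/
def cdLattice (G : Type*) [Group G] : Set (Subgroup G) :=
  {H : Subgroup G | cdMeasure H = cdMax G}

/-- There is no non-trivial finite group `G` with `CD(G) = L(G)`: if `G` is a non-trivial
finite group, then the Chermak–Delgado lattice is not all of the subgroup lattice, i.e.
some subgroup `H ≤ G` satisfies `m_G(H) < m*(G)`. -/
theorem cdLattice_ne_subgroupLattice (G : Type*) [Group G] [Finite G] [Nontrivial G] :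
    cdLattice G ≠ Set.univ ∧ ∃ H : Subgroup G, cdMeasure H < cdMax G := by
  have hbdd : BddAbove (Set.range (cdMeasure (G := G))) := (Set.finite_range _).bddAbove
  have hle : ∀ H : Subgroup G, cdMeasure H ≤ cdMax G := fun H => le_csSup hbdd ⟨H, rfl⟩
  have key : ∃ H : Subgroup G, cdMeasure H < cdMax G := by
    by_contra hcon
    push_neg at hcon
    have heq : ∀ H : Subgroup G, cdMeasure H = cdMax G :=
      fun H => le_antisymm (hle H) (hcon H)
    -- cdMeasure ⊥ = |G|
    have hcent_bot : Subgroup.centralizer ((⊥ : Subgroup G) : Set G) = ⊤ := by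
      rw [Subgroup.eq_top_iff']
      intro g
      rw [Subgroup.mem_centralizer_iff]
      intro h hh
      rw [Subgroup.coe_bot, Set.mem_singleton_iff] at hh
      simp [hh]
    have hbot : cdMeasure (⊥ : Subgroup G) = Nat.card G := by
      rw [cdMeasure, hcent_bot, Subgroup.card_bot, Subgroup.card_top, one_mul]
    have hmax : cdMax G = Nat.card G := by rw [← heq ⊥, hbot]
    -- a prime dividing |G|
    have hG1 : 1 < Nat.card G := Finite.one_lt_card
    set p := (Nat.card G).minFac with hp_def
    have hp : p.Prime := Nat.minFac_prime (by omega)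
    have hpdvd : p ∣ Nat.card G := Nat.minFac_dvd _
    haveI : Fact p.Prime := ⟨hp⟩
    -- Sylow p-subgroup
    obtain ⟨P⟩ : Nonempty (Sylow p G) := inferInstance
    have hPcard : Nat.card P = p ^ (Nat.card G).factorization p :=
      P.card_eq_multiplicity
    -- element of order p in the center of P
    have hPpg : IsPGroup p (P : Subgroup G) := P.isPGroup'
    haveI : Nontrivial (P : Subgroup G) := by
      exact (Subgroup.nontrivial_iff_ne_bot (P : Subgroup G)).mpr (P.ne_bot_of_dvd_card hpdvd)
    haveI : Nontrivial (Subgroup.center (P : Subgroup G)) := hPpg.center_nontrivial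
    have hcpg : IsPGroup p (Subgroup.center (P : Subgroup G)) := hPpg.to_subgroup _
    have hpdvdc : p ∣ Nat.card (Subgroup.center (P : Subgroup G)) := by
      obtain ⟨k, hk⟩ := IsPGroup.iff_card.mp hcpg
      rcases Nat.eq_zero_or_pos k with h0 | h0
      · have h1 := Finite.one_lt_card (α := Subgroup.center (P : Subgroup G))
        rw [h0, pow_zero] at hk
        omega
      · exact hk ▸ dvd_pow_self p h0.ne'
    obtain ⟨z, hz⟩ := exists_prime_orderOf_dvd_card' (G := Subgroup.center (P : Subgroup G)) p hpdvdc
    -- the corresponding element of G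
    set x : G := ((z : (P : Subgroup G)) : G) with hx_def
    have hordx : orderOf x = p := by
      rw [hx_def, Subgroup.orderOf_coe, Subgroup.orderOf_coe, hz]
    -- P centralizes x, hence centralizes zpowers x
    have hPle : (P : Subgroup G) ≤ Subgroup.centralizer ((Subgroup.zpowers x : Subgroup G) : Set G) := by
      intro g hg
      rw [Subgroup.mem_centralizer_iff]
      intro h hh
      obtain ⟨k, rfl⟩ := hh
      have hcomm : Commute x g := by
        have := z.2.comm ⟨g, hg⟩
        have := congrArg (fun a : (P : Subgroup G) => (a : G)) this
        simpa [Commute, SemiconjBy, hx_def] using this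
      show x ^ k * g = g * x ^ k
      exact (hcomm.zpow_left k).eq
    -- measure of zpowers x
    have hcardzp : Nat.card (Subgroup.zpowers x) = p := by
      rw [Nat.card_zpowers, hordx]
    have hmeas : p * Nat.card (Subgroup.centralizer ((Subgroup.zpowers x : Subgroup G) : Set G))
        = Nat.card G := by
      have := heq (Subgroup.zpowers x)
      rwa [cdMeasure, hcardzp, hmax] at this
    -- divisibility contradiction
    have hdvdC : Nat.card P ∣
        Nat.card (Subgroup.centralizer ((Subgroup.zpowers x : Subgroup G) : Set G)) :=
      Subgroup.card_dvd_of_le hPle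
    have hfinal : p ^ ((Nat.card G).factorization p + 1) ∣ Nat.card G := by
      rw [pow_succ, ← hPcard, ← hmeas, mul_comm p]
      exact mul_dvd_mul_right hdvdC p
    have := (Nat.Prime.pow_dvd_iff_le_factorization hp (by omega)).mp hfinal
    omega
  obtain ⟨H, hH⟩ := key
  refine ⟨fun hu => ?_, H, hH⟩
  have : H ∈ cdLattice G := hu ▸ Set.mem_univ H
  exact absurd this (by simp [cdLattice, hH.ne])
end

section
/- Let G be a finite group. If |G| divides m_G(H) for every subgroup H ≤ G, then G is nilpotent. -/
theorem Subgroup.index_centralizer_dvd_card_of_card_dvd_cdMeasure {G : Type*} [Group G]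
    [Finite G] {H : Subgroup G} (h : Nat.card G ∣ cdMeasure H) :
    (centralizer (H : Set G)).index ∣ Nat.card H := by
  rw [cdMeasure, ← (centralizer (H : Set G)).card_mul_index, mul_comm (Nat.card H)] at h
  exact Nat.dvd_of_mul_dvd_mul_left Nat.card_pos h

theorem Sylow.normal_of_index_normalizer_dvd_card {G : Type*} [Group G] [Finite G] {p : ℕ}
    [Fact p.Prime] (P : Sylow p G)
    (h : (Subgroup.normalizer (P : Set G)).index ∣ Nat.card P) : (P : Subgroup G).Normal := by
  obtain ⟨n, hn⟩ := P.isPGroup'.exists_card_eq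
  have hcoprime : Nat.Coprime (Subgroup.normalizer (P : Set G)).index p :=
    Nat.Coprime.symm <| (Nat.Prime.coprime_iff_not_dvd Fact.out).mpr fun hp ↦
      P.not_dvd_index (hp.trans (Subgroup.index_dvd_of_le Subgroup.le_normalizer))
  rw [← Subgroup.normalizer_eq_top_iff, ← Subgroup.index_eq_one]
  exact (hcoprime.pow_right n).eq_one_of_dvd (hn ▸ h)

/-- If `|G|` divides `m_G(H)` for every subgroup `H ≤ G`, then `G` is nilpotent. -/
theorem isNilpotent_of_forall_card_dvd_cdMeasure (G : Type*) [Group G] [Finite G]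
    (h : ∀ H : Subgroup G, Nat.card G ∣ cdMeasure H) : Group.IsNilpotent G := by
  refine (Group.isNilpotent_of_finite_tfae.out 3 0).mp ?_
  intro p _ P
  exact P.normal_of_index_normalizer_dvd_card <|
    (Subgroup.index_dvd_of_le (Subgroup.centralizer_le_normalizer _)).trans
      (Subgroup.index_centralizer_dvd_card_of_card_dvd_cdMeasure (h P))
end

section
/- Let G be a finite group. If the image of the Chermak–Delgado measure m_G consists of consecutive integers, i.e., Im(m_G) = {n, n+1, ..., n+k} for some positive integer n and nonnegative integer k, then k = 0, n = |G|, and G is the trivial group. -/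
lemma nat_coprime_succ_self' (m : ℕ) : Nat.Coprime (m + 1) m := by
  show Nat.gcd (m + 1) m = 1
  rw [Nat.add_comm, Nat.gcd_add_self_left, Nat.gcd_one_left]

lemma cdMeasure_bot_eq (G : Type*) [Group G] : cdMeasure (⊥ : Subgroup G) = Nat.card G := by
  have h1 : Subgroup.centralizer ((⊥ : Subgroup G) : Set G) = ⊤ := by
    rw [Subgroup.eq_top_iff']
    intro x
    rw [Subgroup.mem_centralizer_iff]
    intro h hh
    rw [Subgroup.coe_bot, Set.mem_singleton_iff] at hh
    subst hh; simp
  rw [cdMeasure, h1, Subgroup.card_bot, Subgroup.card_top, one_mul]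

/-- If the image of the Chermak–Delgado measure of `G` consists of consecutive integers
`{n, n+1, ..., n+k}` with `n` positive, then `k = 0`, `n = |G|` and `G` is trivial. -/
theorem eq_trivial_of_cdMeasure_range_consecutive (G : Type*) [Group G] [Finite G]
    (n k : ℕ) (hn : 0 < n)
    (h : Set.range (cdMeasure (G := G)) = Set.Icc n (n + k)) :
    k = 0 ∧ n = Nat.card G ∧ Subsingleton G := by
  classical
  set N := Nat.card G with hN
  have hNpos : 0 < N := Nat.card_pos
  have hGmem : N ∈ Set.Icc n (n + k) := by
    rw [← h]
    exact ⟨⊥, cdMeasure_bot_eq G⟩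
  -- Any value of the measure coprime to |G| must equal |G|.
  have key : ∀ m : ℕ, m ∈ Set.Icc n (n + k) → Nat.Coprime m N → m = N := by
    intro m hm hcop
    rw [← h] at hm
    obtain ⟨H, hH⟩ := hm
    have hdvd1 : Nat.card H ∣ m := hH ▸ Dvd.intro _ rfl
    have hdvd2 : Nat.card H ∣ N := Subgroup.card_subgroup_dvd_card H
    have h1 : Nat.card H = 1 := Nat.dvd_one.mp (hcop ▸ Nat.dvd_gcd hdvd1 hdvd2)
    have hb : H = ⊥ := Subgroup.card_eq_one.mp h1
    rw [← hH, hb, cdMeasure_bot_eq]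
  -- Step 1 : k = 0.
  have hk : k = 0 := by
    by_contra hk
    have hk1 : 1 ≤ k := Nat.one_le_iff_ne_zero.mpr hk
    rcases lt_or_eq_of_le hGmem.2 with hlt | heq
    · -- N + 1 is a value, coprime to N
      have hmem : N + 1 ∈ Set.Icc n (n + k) :=
        ⟨le_trans hGmem.1 (Nat.le_succ N), hlt⟩
      have := key (N + 1) hmem (nat_coprime_succ_self' N)
      omega
    · -- N - 1 is a value, coprime to N
      have hmem : N - 1 ∈ Set.Icc n (n + k) := by
        constructor <;> omega
      have hcop : Nat.Coprime (N - 1) N := by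
        have hNe : N = (N - 1) + 1 := by omega
        rw [hNe]
        exact (nat_coprime_succ_self' (N - 1)).symm
      have := key (N - 1) hmem hcop
      omega
  subst hk
  -- Step 2 : n = N.
  have hnN : n = N := by
    have := hGmem
    simp only [Nat.add_zero, Set.mem_Icc] at this
    omega
  subst hnN
  refine ⟨rfl, rfl, ?_⟩
  -- Step 3 : G is trivial.
  by_contra hns
  rw [not_subsingleton_iff_nontrivial] at hns
  have hcard1 : 1 < N := Finite.one_lt_card
  set p := N.minFac with hp
  have hpp : p.Prime := Nat.minFac_prime (by omega)
  haveI : Fact p.Prime := ⟨hpp⟩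
  have hpdvd : p ∣ N := Nat.minFac_dvd N
  obtain ⟨P⟩ : Nonempty (Sylow p G) := Sylow.nonempty
  have hcardP : Nat.card P = p ^ (Nat.factorization N p) := Sylow.card_eq_multiplicity P
  have hfpos : 0 < Nat.factorization N p :=
    Nat.Prime.factorization_pos_of_dvd hpp (by omega) hpdvd
  haveI : Nontrivial P := by
    rw [← Finite.one_lt_card_iff_nontrivial, hcardP]
    exact Nat.one_lt_pow (by omega) hpp.one_lt
  haveI : Nontrivial (Subgroup.center P) := P.isPGroup'.center_nontrivial
  obtain ⟨z, hz⟩ := exists_ne (1 : Subgroup.center P)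
  set g : G := ((z : P) : G) with hg
  have hgne : g ≠ 1 := by
    intro hcon
    apply hz
    have : (z : P) = 1 := Subtype.ext hcon
    exact Subtype.ext this
  set H := Subgroup.zpowers g with hHdef
  -- p divides |H|
  have hcardH : Nat.card H = orderOf g := Nat.card_zpowers g
  have hordP : orderOf g ∣ Nat.card P := by
    have : orderOf g = orderOf (z : P) :=
      (orderOf_injective (P : Subgroup G).subtype (Subgroup.subtype_injective _) (z : P))
    rw [this]
    exact orderOf_dvd_natCard _
  have hpH : p ∣ Nat.card H := by
    rw [hcardH]
    rw [hcardP] at hordP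
    obtain ⟨b, hb, hbe⟩ := (Nat.dvd_prime_pow hpp).mp hordP
    have hb0 : b ≠ 0 := by
      intro hb0
      rw [hb0, pow_zero] at hbe
      exact hgne (orderOf_eq_one_iff.mp hbe)
    rw [hbe]
    exact dvd_pow_self p hb0
  -- P ≤ C_G(H)
  have hle : (P : Subgroup G) ≤ Subgroup.centralizer (H : Set G) := by
    intro x hx
    rw [Subgroup.mem_centralizer_iff]
    intro y hy
    obtain ⟨i, hi⟩ := Subgroup.mem_zpowers_iff.mp hy
    have hcomm : Commute g x := by
      have := Subgroup.mem_center_iff.mp z.2 ⟨x, hx⟩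
      have := congrArg (fun w : P => (w : G)) this
      simpa [Commute, SemiconjBy, hg] using this.symm
    have := (hcomm.zpow_left i).symm
    rw [← hi]
    exact this.symm
  have hPC : Nat.card P ∣ Nat.card (Subgroup.centralizer (H : Set G)) :=
    Subgroup.card_dvd_of_le hle
  -- the measure of H is N
  have hHval : cdMeasure H = N := by
    have : cdMeasure H ∈ Set.Icc N (N + 0) := h ▸ Set.mem_range_self H
    simpa using this
  -- derive p^(f+1) ∣ N
  obtain ⟨s, hs⟩ := hpH
  obtain ⟨t, ht⟩ := hPC
  have hdvd0 : p * Nat.card (P : Subgroup G) ∣ N := by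
    refine ⟨s * t, ?_⟩
    rw [← hHval, cdMeasure, hs, ht]
    ring
  have hdvd : p ^ (Nat.factorization N p + 1) ∣ N := by
    rw [pow_succ]
    rw [hcardP] at hdvd0
    rwa [mul_comm] at hdvd0
  have := (Nat.Prime.pow_dvd_iff_le_factorization hpp (by omega)).mp hdvd
  omega
end

section
/- Let G be a finite group. Then the following three conditions are equivalent: (1) m_G(H) divides m_G(K) for all subgroups H ≤ K ≤ G; (2) m_G(H) = m_G(H ∩ Z(G)) for every subgroup H ≤ G; (3) CD(G) = { H ≤ G : Z(G) ≤ H }. -/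
section Aux

variable {G : Type*} [Group G]

/-- Product formula: `|H ⊔ N| * |H ⊓ N| = |H| * |N|` for `N` normal. -/
lemma aux_card_sup_mul_card_inf (H N : Subgroup G) [N.Normal] :
    Nat.card (H ⊔ N : Subgroup G) * Nat.card (H ⊓ N : Subgroup G) =
      Nat.card H * Nat.card N := by
  have e1 : Nat.card (H ⧸ N.subgroupOf H) =
      Nat.card ((H ⊔ N : Subgroup G) ⧸ N.subgroupOf (H ⊔ N)) :=
    Nat.card_congr (QuotientGroup.quotientInfEquivProdNormalQuotient H N).toEquiv
  have e2 : Nat.card (N.subgroupOf H) = Nat.card (H ⊓ N : Subgroup G) := by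
    have h := Nat.card_congr (Subgroup.subgroupOfEquivOfLe (inf_le_right : N ⊓ H ≤ H)).toEquiv
    rw [Subgroup.inf_subgroupOf_right] at h
    rw [h, inf_comm]
  have e3 : Nat.card (N.subgroupOf (H ⊔ N)) = Nat.card N :=
    Nat.card_congr (Subgroup.subgroupOfEquivOfLe le_sup_right).toEquiv
  have l1 := Subgroup.card_eq_card_quotient_mul_card_subgroup (N.subgroupOf H)
  have l2 := Subgroup.card_eq_card_quotient_mul_card_subgroup (N.subgroupOf (H ⊔ N))
  rw [e2] at l1
  rw [e3, ← e1] at l2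
  rw [l1, l2]
  ring

lemma aux_centralizer_sup_center (H : Subgroup G) :
    Subgroup.centralizer ((H ⊔ Subgroup.center G : Subgroup G) : Set G) =
      Subgroup.centralizer (H : Set G) := by
  apply le_antisymm
  · exact Subgroup.centralizer_le (SetLike.coe_subset_coe.mpr le_sup_left)
  · intro x hx
    rw [Subgroup.mem_centralizer_iff] at hx ⊢
    intro g hg
    rw [Subgroup.mul_normal] at hg
    obtain ⟨h, hh, z, hz, rfl⟩ := hg
    have hzc : ∀ y : G, z * y = y * z := fun y => (Subgroup.mem_center_iff.mp hz y).symm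
    calc h * z * x = h * (x * z) := by rw [mul_assoc, hzc x]
    _ = (h * x) * z := by rw [mul_assoc]
    _ = (x * h) * z := by rw [hx h hh]
    _ = x * (h * z) := by rw [mul_assoc]

lemma aux_cdMeasure_inf_center (H : Subgroup G) :
    cdMeasure (H ⊓ Subgroup.center G) = Nat.card (H ⊓ Subgroup.center G : Subgroup G) * Nat.card G := by
  unfold cdMeasure
  have : Subgroup.centralizer ((H ⊓ Subgroup.center G : Subgroup G) : Set G) = ⊤ :=
    Subgroup.centralizer_eq_top_iff_subset.mpr
      (fun x hx => (Subgroup.mem_inf.mp hx).2)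
  rw [this, Subgroup.card_top]

lemma aux_cdMeasure_center :
    cdMeasure (Subgroup.center G) = Nat.card (Subgroup.center G) * Nat.card G := by
  unfold cdMeasure
  rw [Subgroup.centralizer_eq_top_iff_subset.mpr (fun x hx => hx), Subgroup.card_top]

lemma aux_cdMeasure_top :
    cdMeasure (⊤ : Subgroup G) = Nat.card G * Nat.card (Subgroup.center G) := by
  unfold cdMeasure
  rw [Subgroup.coe_top, Subgroup.centralizer_univ, Subgroup.card_top]

/-- Key lemma: if every subgroup containing the center has measure `|Z|·|G|`,
then `m(H) = m(H ⊓ Z)` for every `H`. -/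
lemma aux_key [Finite G]
    (hK : ∀ K : Subgroup G, Subgroup.center G ≤ K →
      cdMeasure K = Nat.card (Subgroup.center G) * Nat.card G)
    (H : Subgroup G) : cdMeasure H = cdMeasure (H ⊓ Subgroup.center G) := by
  have h1 := hK (H ⊔ Subgroup.center G) le_sup_right
  unfold cdMeasure at h1
  rw [aux_centralizer_sup_center] at h1
  have hZpos : 0 < Nat.card (Subgroup.center G) := Nat.card_pos
  apply Nat.eq_of_mul_eq_mul_left hZpos
  have := congrArg (· * Nat.card (H ⊓ Subgroup.center G : Subgroup G)) h1
  rw [mul_right_comm, aux_card_sup_mul_card_inf] at this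
  rw [aux_cdMeasure_inf_center]
  unfold cdMeasure
  calc Nat.card (Subgroup.center G) * (Nat.card H * Nat.card (Subgroup.centralizer (H : Set G)))
      = Nat.card H * Nat.card (Subgroup.center G) * Nat.card (Subgroup.centralizer (H : Set G)) := by
        ring
    _ = Nat.card (Subgroup.center G) * Nat.card G * Nat.card (H ⊓ Subgroup.center G : Subgroup G) := this
    _ = Nat.card (Subgroup.center G) * (Nat.card (H ⊓ Subgroup.center G : Subgroup G) * Nat.card G) := by
        ring

end Aux

/-- For a finite group `G`, the following are equivalent:
(1) `m_G(H) ∣ m_G(K)` for all subgroups `H ≤ K ≤ G`;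
(2) `m_G(H) = m_G(H ⊓ Z(G))` for every subgroup `H ≤ G`;
(3) `CD(G) = {H ≤ G | Z(G) ≤ H}`. -/
theorem cdMeasure_dvd_iff_inf_center_iff_cdLattice (G : Type*) [Group G] [Finite G] :
    ((∀ H K : Subgroup G, H ≤ K → cdMeasure H ∣ cdMeasure K) ↔
      (∀ H : Subgroup G, cdMeasure H = cdMeasure (H ⊓ Subgroup.center G))) ∧
    ((∀ H : Subgroup G, cdMeasure H = cdMeasure (H ⊓ Subgroup.center G)) ↔
      cdLattice G = {H : Subgroup G | Subgroup.center G ≤ H}) := by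
  have hGpos : 0 < Nat.card G := Nat.card_pos
  constructor
  · constructor
    · -- (1) → (2)
      intro h1
      apply aux_key
      intro K hZK
      have d1 : cdMeasure (Subgroup.center G) ∣ cdMeasure K := h1 _ _ hZK
      have d2 : cdMeasure K ∣ cdMeasure (⊤ : Subgroup G) := h1 _ _ le_top
      rw [aux_cdMeasure_center] at d1
      rw [aux_cdMeasure_top, mul_comm] at d2
      rw [← Nat.dvd_antisymm d2 d1]
    · -- (2) → (1)
      intro h2 H K hHK
      rw [h2 H, h2 K, aux_cdMeasure_inf_center, aux_cdMeasure_inf_center]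
      exact mul_dvd_mul (Subgroup.card_dvd_of_le (inf_le_inf_right _ hHK)) dvd_rfl
  · constructor
    · -- (2) → (3)
      intro h2
      have hbound : ∀ x ∈ Set.range (cdMeasure (G := G)),
          x ≤ Nat.card (Subgroup.center G) * Nat.card G := by
        rintro x ⟨H, rfl⟩
        rw [h2 H, aux_cdMeasure_inf_center]
        exact Nat.mul_le_mul_right _ (Subgroup.card_le_of_le inf_le_right)
      have hmax : cdMax G = Nat.card (Subgroup.center G) * Nat.card G := by
        apply le_antisymm
        · exact csSup_le ⟨cdMeasure (⊥ : Subgroup G), ⟨⊥, rfl⟩⟩ hbound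
        · exact le_csSup ⟨_, hbound⟩ ⟨Subgroup.center G, aux_cdMeasure_center⟩
      ext H
      simp only [cdLattice, Set.mem_setOf_eq, hmax, h2 H, aux_cdMeasure_inf_center]
      constructor
      · intro he
        have hcard : Nat.card (H ⊓ Subgroup.center G : Subgroup G)
            = Nat.card (Subgroup.center G) :=
          Nat.eq_of_mul_eq_mul_right hGpos he
        have : H ⊓ Subgroup.center G = Subgroup.center G :=
          Subgroup.eq_of_le_of_card_ge inf_le_right hcard.ge
        rw [← this]
        exact inf_le_left
      · intro hZH
        rw [inf_eq_right.mpr hZH]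
    · -- (3) → (2)
      intro h3
      apply aux_key
      intro K hZK
      have hZ : cdMeasure (Subgroup.center G) = cdMax G := by
        have : Subgroup.center G ∈ cdLattice G := by
          rw [h3]; show Subgroup.center G ≤ Subgroup.center G; exact le_rfl
        exact this
      have hKmem : cdMeasure K = cdMax G := by
        have : K ∈ cdLattice G := by rw [h3]; exact hZK
        exact this
      rw [hKmem, ← hZ, aux_cdMeasure_center]
end

section
/- Let G be a finite group and H ≤ G a subgroup. Then m_G(H) ≤ m_G(C_G(H)), and if m_G(H) = m_G(C_G(H)), then C_G(C_G(H)) = H. -/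
lemma le_cc {G : Type*} [Group G] (H : Subgroup G) :
    H ≤ Subgroup.centralizer ((Subgroup.centralizer (H : Set G) : Subgroup G) : Set G) := by
  intro h hh g hg
  exact (hg h hh).symm

/-- For any subgroup `H` of a finite group `G`, `m_G(H) ≤ m_G(C_G(H))`; and if the measures
are equal, then `C_G(C_G(H)) = H`. -/
theorem cdMeasure_le_cdMeasure_centralizer (G : Type*) [Group G] [Finite G] (H : Subgroup G) :
    cdMeasure H ≤ cdMeasure (Subgroup.centralizer (H : Set G)) ∧
      (cdMeasure H = cdMeasure (Subgroup.centralizer (H : Set G)) →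
        Subgroup.centralizer ((Subgroup.centralizer (H : Set G) : Subgroup G) : Set G) = H) := by
  have hle := le_cc H
  have hc : Nat.card H ≤ Nat.card (Subgroup.centralizer
      ((Subgroup.centralizer (H : Set G) : Subgroup G) : Set G)) :=
    Subgroup.card_le_of_le hle
  have hpos : 0 < Nat.card (Subgroup.centralizer (H : Set G)) := Nat.card_pos
  constructor
  · unfold cdMeasure
    rw [mul_comm (Nat.card (Subgroup.centralizer (H : Set G)))]
    exact Nat.mul_le_mul hc le_rfl
  · intro heq
    refine (Subgroup.eq_of_le_of_card_ge hle ?_).symm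
    unfold cdMeasure at heq
    rw [mul_comm (Nat.card (Subgroup.centralizer (H : Set G)))] at heq
    exact le_of_eq (Nat.eq_of_mul_eq_mul_right hpos heq.symm)
end

section
/- Let n ≥ 3 and let Q_{2^n} = ⟨a, b | a^{2^{n-1}} = 1, a^{2^{n-2}} = b^2, b^{-1}ab = a^{-1}⟩ be the generalized quaternion group of order 2^n. Then m*(Q_{2^n}) = 2^{2n-2}. -/
open Subgroup

section General

variable {G : Type*} [Group G] [Finite G]

theorem Subgroup.two_mul_card_le_card_of_lt {K L : Subgroup G} (h : K < L) :
    2 * Nat.card K ≤ Nat.card L := by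
  obtain ⟨k, hk⟩ := card_dvd_of_le h.le
  have hk0 : k ≠ 0 := by
    rintro rfl
    exact Nat.card_pos.ne' (hk.trans (mul_zero _))
  have hk1 : k ≠ 1 := by
    rintro rfl
    exact h.ne (eq_of_le_of_card_ge h.le (by rw [hk, mul_one]))
  rw [hk, mul_comm]
  exact Nat.mul_le_mul_left _ (by omega)

theorem four_mul_cdMeasure_le_card_sq {H : Subgroup G} (hH : H ≠ ⊤) (hZ : ¬H ≤ center G) :
    4 * cdMeasure H ≤ Nat.card G ^ 2 := by
  have hC : centralizer (H : Set G) ≠ ⊤ := fun h => hZ (centralizer_eq_top_iff_subset.1 h)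
  have hH2 := two_mul_card_le_card_of_lt (lt_top_iff_ne_top.2 hH)
  have hC2 := two_mul_card_le_card_of_lt (lt_top_iff_ne_top.2 hC)
  rw [card_top] at hH2 hC2
  calc 4 * cdMeasure H = (2 * Nat.card H) * (2 * Nat.card (centralizer (H : Set G))) := by
        rw [cdMeasure]; ring
    _ ≤ Nat.card G ^ 2 := by rw [sq]; exact Nat.mul_le_mul hH2 hC2

theorem cdMeasure_le_max (H : Subgroup G) :
    cdMeasure H ≤ max (Nat.card G * Nat.card (center G)) (Nat.card G ^ 2 / 4) := by
  by_cases hH : H = ⊤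
  · subst hH
    rw [cdMeasure, coe_top, centralizer_univ, card_top]
    exact le_max_left _ _
  by_cases hZ : H ≤ center G
  · refine le_max_of_le_left ?_
    rw [cdMeasure, mul_comm]
    exact Nat.mul_le_mul (card_le_card_group _) (card_le_of_le hZ)
  · refine le_max_of_le_right ((Nat.le_div_iff_mul_le (by norm_num)).2 ?_)
    rw [mul_comm]
    exact four_mul_cdMeasure_le_card_sq hH hZ

end General

namespace QuaternionGroup

variable {m : ℕ}

theorem a_one_zpow (k : ℤ) : (a 1 : QuaternionGroup m) ^ k = a k := by
  obtain ⟨k, rfl | rfl⟩ := k.eq_nat_or_neg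
  · rw [zpow_natCast, a_one_pow, Int.cast_natCast]
  · rw [zpow_neg, zpow_natCast, a_one_pow, Int.cast_neg, Int.cast_natCast]
    exact inv_eq_of_mul_eq_one_right (by rw [a_mul_a, add_neg_cancel, a_zero])

theorem a_mem_zpowers_a_one (i : ZMod (2 * m)) : a i ∈ zpowers (a 1 : QuaternionGroup m) := by
  obtain ⟨k, rfl⟩ := ZMod.intCast_surjective i
  exact ⟨k, a_one_zpow k⟩

theorem a_one_mul_xa_ne (hm : m ≠ 1) (j : ZMod (2 * m)) :
    a 1 * xa j ≠ (xa j * a 1 : QuaternionGroup m) := by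
  rw [a_mul_xa, xa_mul_a, Ne, xa.injEq]
  intro h
  have h2 : ((2 : ℕ) : ZMod (2 * m)) = 0 := by push_cast; linear_combination -h
  rw [ZMod.natCast_eq_zero_iff] at h2
  exact hm (Nat.dvd_one.1 (Nat.dvd_of_mul_dvd_mul_left two_pos (mul_one 2 ▸ h2)))

theorem centralizer_zpowers_a_one (hm : m ≠ 1) :
    centralizer (zpowers (a 1 : QuaternionGroup m) : Set (QuaternionGroup m)) = zpowers (a 1) := by
  refine le_antisymm (fun x hx => ?_) (le_centralizer _)
  cases x with
  | a i => exact a_mem_zpowers_a_one i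
  | xa j => exact absurd (mem_centralizer_iff.1 hx (a 1) (mem_zpowers _)) (a_one_mul_xa_ne hm j)

theorem card_center_le [NeZero m] (hm : m ≠ 1) : Nat.card (center (QuaternionGroup m)) ≤ m := by
  have hlt : center (QuaternionGroup m) < zpowers (a 1) := by
    refine lt_of_le_of_ne ((center_le_centralizer _).trans (centralizer_zpowers_a_one hm).le) ?_
    intro h
    have ha : (a 1 : QuaternionGroup m) ∈ center _ := h ▸ mem_zpowers _
    exact a_one_mul_xa_ne hm 0 (mem_center_iff.1 ha (xa 0)).symm
  have := two_mul_card_le_card_of_lt hlt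
  rw [Nat.card_zpowers, orderOf_a_one] at this
  omega

theorem cdMeasure_zpowers_a_one (hm : m ≠ 1) :
    cdMeasure (zpowers (a 1 : QuaternionGroup m)) = (2 * m) ^ 2 := by
  rw [cdMeasure, centralizer_zpowers_a_one hm, Nat.card_zpowers, orderOf_a_one, sq]

theorem cdMax_eq [NeZero m] (hm : m ≠ 1) : cdMax (QuaternionGroup m) = (2 * m) ^ 2 := by
  have hcard : Nat.card (QuaternionGroup m) = 4 * m := by rw [Nat.card_eq_fintype_card, card]
  refine IsGreatest.csSup_eq ⟨⟨_, cdMeasure_zpowers_a_one hm⟩, ?_⟩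
  rintro _ ⟨H, rfl⟩
  refine (cdMeasure_le_max H).trans (max_le ?_ ?_) <;> rw [hcard]
  · calc 4 * m * Nat.card (center (QuaternionGroup m)) ≤ 4 * m * m :=
          Nat.mul_le_mul_left _ (card_center_le hm)
      _ = (2 * m) ^ 2 := by ring
  · rw [show (4 * m) ^ 2 = (2 * m) ^ 2 * 4 by ring, Nat.mul_div_cancel _ (by norm_num)]

end QuaternionGroup

/-- For `n ≥ 3`, the generalized quaternion group `Q_{2^n}` (of order `2^n`, realized as the
dicyclic group `QuaternionGroup (2^(n-2))`) satisfies `m*(Q_{2^n}) = 2^(2n-2)`. -/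
theorem cdMax_quaternionGroup (n : ℕ) (hn : 3 ≤ n) :
    cdMax (QuaternionGroup (2 ^ (n - 2))) = 2 ^ (2 * n - 2) := by
  have hm : 2 ^ (n - 2) ≠ 1 := (Nat.one_lt_two_pow (by omega)).ne'
  rw [QuaternionGroup.cdMax_eq hm, ← pow_succ', ← pow_mul]
  congr 1
  omega
end
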